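/- For every real p ∈ (1,2], every n ∈ ℕ, and any independent real-valued random variables Y₁,…,Yₙ each with mean zero and finite p-th absolute moment, E[|∑_{i=1}^n Y_i|^p] ≤ 2^p · ∑_{i=1}^n E[|Y_i|^p]. -/

import Mathlib

open MeasureTheory ProbabilityTheory Real

/-!
Pointwise, `|x + y|^p ≤ |x|^p + p |x|^(p-2) x y + 2^p |y|^p`, the middle term being the derivative
of `|·|^p` at `x` applied to `y`. By symmetry `x > 0`; if `x + y > 0` this is the tangent-line
inequality of `t ↦ t^p` at `x + y` combined with the `(p-1)`-Hölder continuity of `t ↦ t^(p-1)`,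
and otherwise `|x + y| ≤ |y|` and `x ≤ |y|` suffice, using `1 + p ≤ 2^p`.
Put `x = Y₁ + ⋯ + Yₖ` and `y = Yₖ₊₁`: by independence and centering the middle term has
expectation zero, so `E|Y₁ + ⋯ + Yₖ₊₁|^p ≤ E|Y₁ + ⋯ + Yₖ|^p + 2^p E|Yₖ₊₁|^p`, and one inducts.
-/

theorem one_add_le_two_rpow {p : ℝ} (hp : 1 ≤ p) : 1 + p ≤ (2 : ℝ) ^ p := by
  have h := one_add_mul_self_le_rpow_one_add (s := 1) (by norm_num) hp
  norm_num at h
  linarith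

theorem rpow_tangent_line_le {p a b : ℝ} (hp : 1 ≤ p) (ha : 0 ≤ a) (hb : 0 < b) :
    b ^ p + p * b ^ (p - 1) * (a - b) ≤ a ^ p := by
  have bernoulli := one_add_mul_self_le_rpow_one_add (s := a / b - 1)
    (by linarith [div_nonneg ha hb.le]) hp
  rw [add_sub_cancel, div_rpow ha hb.le, le_div_iff₀ (rpow_pos_of_pos hb p)] at bernoulli
  have hbp : b ^ p = b ^ (p - 1) * b := by rw [← rpow_add_one hb.ne', sub_add_cancel]
  rw [hbp] at bernoulli ⊢
  calc b ^ (p - 1) * b + p * b ^ (p - 1) * (a - b)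
      = (1 + p * (a / b - 1)) * (b ^ (p - 1) * b) := by field_simp
    _ ≤ a ^ p := bernoulli

theorem abs_rpow_sub_rpow_le {r a b : ℝ} (hr0 : 0 ≤ r) (hr1 : r ≤ 1) (ha : 0 ≤ a) (hb : 0 ≤ b) :
    |a ^ r - b ^ r| ≤ |a - b| ^ r := by
  wlog hba : b ≤ a generalizing a b
  · rw [abs_sub_comm, abs_sub_comm a]
    exact this hb ha (le_of_not_ge hba)
  have subadd := rpow_add_le_add_rpow hb (sub_nonneg.2 hba) hr0 hr1
  rw [add_sub_cancel] at subadd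
  rw [abs_of_nonneg (sub_nonneg.2 (rpow_le_rpow hb hba hr0)), abs_of_nonneg (sub_nonneg.2 hba)]
  linarith

theorem abs_add_rpow_le_of_pos {p x : ℝ} (hp1 : 1 < p) (hp2 : p ≤ 2) (hx : 0 < x) (y : ℝ) :
    |x + y| ^ p ≤ x ^ p + p * (x ^ (p - 2) * x) * y + 2 ^ p * |y| ^ p := by
  rw [← rpow_add_one hx.ne', show p - 2 + 1 = p - 1 by ring]
  have h2p := one_add_le_two_rpow hp1.le
  have hyp : 0 ≤ |y| ^ p := by positivity
  have hy_mul : |y| ^ (p - 1) * |y| = |y| ^ p := by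
    rw [← rpow_add_one' (abs_nonneg y) (by linarith), sub_add_cancel]
  rcases lt_or_ge 0 (x + y) with hxy | hxy
  · have tangent := rpow_tangent_line_le hp1.le hx.le hxy
    have holder : ((x + y) ^ (p - 1) - x ^ (p - 1)) * y ≤ |y| ^ p := calc
      _ ≤ |(x + y) ^ (p - 1) - x ^ (p - 1)| * |y| := by rw [← abs_mul]; exact le_abs_self _
      _ ≤ |y| ^ (p - 1) * |y| := by
        gcongr
        simpa using abs_rpow_sub_rpow_le (by linarith) (by linarith) hxy.le hx.le
      _ = |y| ^ p := hy_mul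
    rw [abs_of_pos hxy]
    nlinarith
  · have hy : |y| = -y := abs_of_neg (by linarith)
    have hx_le : x ≤ |y| := by linarith
    have hxy_le : |x + y| ≤ |y| := by rw [abs_of_nonpos hxy]; linarith
    have cross : x ^ (p - 1) * |y| ≤ |y| ^ p := by
      rw [← hy_mul]
      gcongr
    have cross' : -(p * |y| ^ p) ≤ p * x ^ (p - 1) * y := by
      have := mul_le_mul_of_nonneg_left cross (by linarith : 0 ≤ p)
      rw [hy] at this ⊢
      linarith
    have : |x + y| ^ p ≤ |y| ^ p := by gcongr
    have : 0 ≤ x ^ p := by positivity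
    nlinarith [mul_le_mul_of_nonneg_right h2p hyp]

theorem abs_add_rpow_le {p : ℝ} (hp1 : 1 < p) (hp2 : p ≤ 2) (x y : ℝ) :
    |x + y| ^ p ≤ |x| ^ p + p * (|x| ^ (p - 2) * x) * y + 2 ^ p * |y| ^ p := by
  rcases lt_trichotomy x 0 with hx | rfl | hx
  · have := abs_add_rpow_le_of_pos hp1 hp2 (neg_pos.2 hx) (-y)
    rw [abs_of_neg hx]
    convert this using 2
    · rw [← neg_add, abs_neg]
    · ring
    · rw [abs_neg]
  · have h2p := one_add_le_two_rpow hp1.le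
    have hyp : 0 ≤ |y| ^ p := by positivity
    simp only [zero_add, abs_zero, zero_rpow (by linarith : p ≠ 0), mul_zero, zero_mul, add_zero]
    nlinarith
  · rw [abs_of_pos hx]
    exact abs_add_rpow_le_of_pos hp1 hp2 hx y

theorem MeasureTheory.MemLp.integrable_abs_rpow {Ω : Type*} [MeasurableSpace Ω] {μ : Measure Ω}
    {f : Ω → ℝ} {p : ℝ} (hp : 0 < p) (hf : MemLp f (ENNReal.ofReal p) μ) :
    Integrable (fun ω ↦ |f ω| ^ p) μ := by
  simpa [ENNReal.toReal_ofReal hp.le] using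
    hf.integrable_norm_rpow (by simpa using hp) ENNReal.ofReal_ne_top

theorem integral_abs_add_rpow_le_of_indepFun {Ω : Type*} [MeasurableSpace Ω] {P : Measure Ω}
    [IsFiniteMeasure P] {p : ℝ} (hp1 : 1 < p) (hp2 : p ≤ 2) {X Y : Ω → ℝ} (hXY : IndepFun X Y P)
    (hX : MemLp X (ENNReal.ofReal p) P) (hY : MemLp Y (ENNReal.ofReal p) P)
    (hY0 : ∫ ω, Y ω ∂P = 0) :
    ∫ ω, |X ω + Y ω| ^ p ∂P ≤ ∫ ω, |X ω| ^ p ∂P + 2 ^ p * ∫ ω, |Y ω| ^ p ∂P := by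
  set φ : ℝ → ℝ := fun t ↦ |t| ^ (p - 2) * t
  have hφ : Measurable φ := by fun_prop
  have hXp := hX.integrable_abs_rpow (by linarith)
  have hYp := hY.integrable_abs_rpow (by linarith)
  have hXYp := (hX.add hY).integrable_abs_rpow (by linarith)
  have hφX : Integrable (fun ω ↦ φ (X ω)) P := by
    refine Integrable.mono' (g := fun ω ↦ ‖X ω‖ ^ (p - 1)) ?_
      (hφ.comp_aemeasurable hX.aemeasurable).aestronglyMeasurable ?_
    · exact integrable_norm_rpow_of_le (p := p - 1) (q := p) hX.aestronglyMeasurable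
        (by linarith) (by linarith) (by linarith) (by simpa using hXp)
    · refine Filter.Eventually.of_forall fun ω ↦ le_of_eq ?_
      simp only [φ, norm_mul, Real.norm_eq_abs, abs_of_nonneg (rpow_nonneg (abs_nonneg _) _)]
      rw [← rpow_add_one' (abs_nonneg _) (by linarith)]
      ring_nf
  have hφXY : IndepFun (fun ω ↦ φ (X ω)) Y P :=
    hXY.comp₀ (ψ := id) hX.aemeasurable hY.aemeasurable hφ.aemeasurable aemeasurable_id
  have hcross_int : Integrable (fun ω ↦ φ (X ω) * Y ω) P :=
    hφXY.integrable_mul hφX (hY.integrable (by simpa using hp1.le))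
  have hcross : ∫ ω, φ (X ω) * Y ω ∂P = 0 := by
    rw [hφXY.integral_fun_mul_eq_mul_integral hφX.aestronglyMeasurable hY.aestronglyMeasurable]
    simp [hY0]
  have hint : Integrable (fun ω ↦ |X ω| ^ p + p * (φ (X ω) * Y ω)) P :=
    hXp.add (hcross_int.const_mul p)
  calc ∫ ω, |X ω + Y ω| ^ p ∂P
      ≤ ∫ ω, (|X ω| ^ p + p * (φ (X ω) * Y ω) + 2 ^ p * |Y ω| ^ p) ∂P := by
        refine integral_mono hXYp (hint.add (hYp.const_mul _)) fun ω ↦ ?_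
        exact (abs_add_rpow_le hp1 hp2 (X ω) (Y ω)).trans_eq (by ring)
    _ = ∫ ω, |X ω| ^ p ∂P + 2 ^ p * ∫ ω, |Y ω| ^ p ∂P := by
        rw [integral_add hint (hYp.const_mul _),
          integral_add hXp (hcross_int.const_mul p), integral_const_mul, integral_const_mul, hcross,
          mul_zero, add_zero]

theorem integral_abs_sum_rpow_le_of_iIndepFun {Ω ι : Type*} [MeasurableSpace Ω] {P : Measure Ω}
    [IsFiniteMeasure P] {p : ℝ} (hp1 : 1 < p) (hp2 : p ≤ 2) {Y : ι → Ω → ℝ}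
    (hindep : iIndepFun Y P) (hY : ∀ i, MemLp (Y i) (ENNReal.ofReal p) P)
    (hmean : ∀ i, ∫ ω, Y i ω ∂P = 0) (s : Finset ι) :
    ∫ ω, |∑ i ∈ s, Y i ω| ^ p ∂P ≤ 2 ^ p * ∑ i ∈ s, ∫ ω, |Y i ω| ^ p ∂P := by
  classical
  induction s using Finset.induction_on with
  | empty => simp [zero_rpow (by linarith : p ≠ 0)]
  | insert a s ha ih =>
    have hindep_a := hindep.indepFun_finsetSum_of_notMem₀ (fun i ↦ (hY i).aemeasurable) ha
    have step := integral_abs_add_rpow_le_of_indepFun hp1 hp2 hindep_a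
      (memLp_finsetSum' s fun i _ ↦ hY i) (hY a) (hmean a)
    simp only [Finset.sum_apply] at step
    simp_rw [Finset.sum_insert ha, add_comm (Y a _), mul_add]
    linarith

/-- Biggins' inequality: for `p ∈ (1,2]` and independent centered random
variables `Y₁,…,Yₙ` with finite `p`-th moments,
`E[|∑ Yᵢ|^p] ≤ 2^p ∑ E[|Yᵢ|^p]`. -/
theorem biggins_moment_inequality {Ω : Type*} [MeasurableSpace Ω]
    (P : Measure Ω) [IsProbabilityMeasure P]
    (p : ℝ) (hp1 : 1 < p) (hp2 : p ≤ 2)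
    (n : ℕ) (Y : Fin n → Ω → ℝ)
    (hmeas : ∀ i, Measurable (Y i))
    (hindep : iIndepFun Y P)
    (hmean : ∀ i, ∫ ω, Y i ω ∂P = 0)
    (hmom : ∀ i, Integrable (fun ω => |Y i ω| ^ p) P) :
    ∫ ω, |∑ i, Y i ω| ^ p ∂P ≤ 2 ^ p * ∑ i, ∫ ω, |Y i ω| ^ p ∂P := by
  have hY : ∀ i, MemLp (Y i) (ENNReal.ofReal p) P := fun i ↦ by
    rw [← integrable_norm_rpow_iff (hmeas i).aestronglyMeasurable
      (ENNReal.ofReal_pos.2 (by linarith)).ne' ENNReal.ofReal_ne_top,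
      ENNReal.toReal_ofReal (by linarith)]
    simpa using hmom i
  exact integral_abs_sum_rpow_le_of_iIndepFun hp1 hp2 hindep hY hmean Finset.univ
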